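/- arXiv:2103.14195 — 2 statements merged into one kernel-verified Lean document; each statement's English description precedes it below -/
import Mathlib

section
/- Let r ≥ 1, let R, D ⊆ {1,…,n−1}, and let σ ∈ S_n. For Z = (z^1,…,z^n) ∈ (ℕ^r)^n write Z^{(2)} ∈ (ℕ^{r−1})^n for the list obtained by deleting the first coordinate of each z^i. Then, as formal power series in q_1,…,q_r: (q_r;q_r)_n · Σ_{Z ∈ (ℕ^r)^n with σ_R(Z) = σ and Des_{R,Z^{(2)}}(σ) = D} q^Z = q_r^{c(D)} · Σ_{S ∈ (ℕ^{r−1})^n with Des_{R,S}(σ) = D} q^S, where c(D) = Σ_{i ∈ D} (n − i) and q^S is a monomial in q_1,…,q_{r−1} only. -/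
/-!
Deleting the first coordinate sends a reading `Z` of `σ` to the pair `(S, h)` where `S = Z⁽²⁾`
and `h t` is the first coordinate of `z^{σ_{t+1}}`. Since the lexicographic order compares first
coordinates first and breaks ties by exactly the descent condition on the tails, once
`Des_{R,S}(σ) = D` the condition `σ_R(Z) = σ` says that `h` is weakly increasing and strictly
increasing at the steps in `D`. Subtracting from `h t` the number of elements of `D` that are at most `t` turns such `h`
into an arbitrary weakly increasing sequence, at the cost of the factor `q_r^{c(D)}`; weakly
increasing sequences of length `n`, weighted by their sum, are partitions into parts of size at
most `n`, with generating function `1 / (q_r;q_r)_n`.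
-/

open scoped Classical

namespace RomeroComaj

noncomputable section

/-- `Seq r` is `ℕ^r`, the type of sequences of natural numbers of length `r`. -/
abbrev Seq (r : ℕ) := Fin r → ℕ

/-- strict lexicographic order on `ℕ^r`. -/
def lexLt {r : ℕ} (a b : Seq r) : Prop :=
  ∃ i : Fin r, (∀ j : Fin r, j < i → a j = b j) ∧ a i < b i

/-- weak lexicographic order on `ℕ^r`. -/
def lexLe {r : ℕ} (a b : Seq r) : Prop :=
  lexLt a b ∨ a = b

/-- `RNbr R a b` : the (1-indexed) indices `a` and `b` are `R`-neighbors,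
i.e. (for `a < b`) all of `a, a+1, …, b-1` lie in `R`. -/
def RNbr (R : Finset ℕ) (a b : ℕ) : Prop :=
  ∀ t ∈ Finset.Ico (min a b) (max a b), t ∈ R

/-- the value `σ_i` of the one-line notation of `σ`, both position `i` and
the value being 1-indexed (junk value `0` outside `1 ≤ i ≤ n`). -/
def pget {n : ℕ} (σ : Equiv.Perm (Fin n)) (i : ℕ) : ℕ :=
  if h : i - 1 < n then (σ ⟨i - 1, h⟩).val + 1 else 0

/-- the sequence `s^i` of a list `S = (s^1, …, s^n)`, `i` being 1-indexed. -/
def sget {n r : ℕ} (S : Fin n → Seq r) (i : ℕ) : Seq r :=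
  if h : i - 1 < n then S ⟨i - 1, h⟩ else 0

/-- the condition for `i` to belong to `Des_{R,S}(σ)`:
`s^{σ_i} > s^{σ_{i+1}} − χ(σ_{i+1} < σ_i ∧ σ_{i+1} ≁_R σ_i) − χ(σ_{i+1} > σ_i ∧ σ_i ∼_R σ_{i+1})`. -/
def desCond {n r : ℕ} (R : Finset ℕ) (S : Fin n → Seq r) (σ : Equiv.Perm (Fin n)) (i : ℕ) :
    Prop :=
  if (pget σ (i+1) < pget σ i ∧ ¬ RNbr R (pget σ (i+1)) (pget σ i)) ∨
      (pget σ i < pget σ (i+1) ∧ RNbr R (pget σ i) (pget σ (i+1)))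
  then lexLe (sget S (pget σ (i+1))) (sget S (pget σ i))
  else lexLt (sget S (pget σ (i+1))) (sget S (pget σ i))

/-- `Des_{R,S}(σ) ⊆ {1, …, n−1}` (1-indexed positions). -/
def DesSet {n r : ℕ} (R : Finset ℕ) (S : Fin n → Seq r) (σ : Equiv.Perm (Fin n)) : Finset ℕ :=
  (Finset.Icc 1 (n-1)).filter (fun i => desCond R S σ i)

/-- `Comaj_{R,S}(σ) = ∑_{i ∈ Des_{R,S}(σ)} (n − i)`. -/
def Comaj {n r : ℕ} (R : Finset ℕ) (S : Fin n → Seq r) (σ : Equiv.Perm (Fin n)) : ℕ :=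
  ∑ i ∈ DesSet R S σ, (n - i)

/-- `s^i` is read before `s^j` in the reading order of `S` (with respect to `R`);
`i, j` are 1-indexed. -/
def readBefore {n r : ℕ} (R : Finset ℕ) (S : Fin n → Seq r) (i j : ℕ) : Prop :=
  lexLt (sget S i) (sget S j) ∨
    (sget S i = sget S j ∧ ((i < j ∧ ¬ RNbr R i j) ∨ (j < i ∧ RNbr R j i)))

/-- `IsReading R S σ` says that the reading permutation `σ_R(S)` equals `σ`,
i.e. `σ` lists `1, …, n` in the reading order of `S`. -/
def IsReading {n r : ℕ} (R : Finset ℕ) (S : Fin n → Seq r) (σ : Equiv.Perm (Fin n)) : Prop :=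
  ∀ i ∈ Finset.Icc 1 (n-1), readBefore R S (pget σ i) (pget σ (i+1))

/-- the operator `Z_{R,σ} : (ℕ^r)^n → (ℕ^{r+1})^n`, prepending to `s^v` the number of
descents of `σ` (w.r.t. `R, S`) at positions strictly before the position of `v` in `σ`. -/
def Zop {n r : ℕ} (R : Finset ℕ) (σ : Equiv.Perm (Fin n)) (S : Fin n → Seq r) :
    Fin n → Seq (r+1) :=
  fun v => Fin.cons ((DesSet R S σ ∩ Finset.Ico 1 ((σ.symm v).val + 1)).card) (S v)

/-- `Zvec R σs i = Z_{R,σ^i} ⋯ Z_{R,σ^1}(∅)` where `σ^{j+1} = σs j`. -/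
def Zvec {n : ℕ} (R : Finset ℕ) (σs : ℕ → Equiv.Perm (Fin n)) : (i : ℕ) → Fin n → Seq i
  | 0 => fun _ => (0 : Seq 0)
  | (i+1) => Zop R (σs i) (Zvec R σs i)

/-- extend a finite vector of permutations to `ℕ`, by the identity. -/
def extFun {n r : ℕ} (σv : Fin r → Equiv.Perm (Fin n)) : ℕ → Equiv.Perm (Fin n) :=
  fun j => if h : j < r then σv ⟨j, h⟩ else 1

/-- `comajI R k σv i = comaj^i_R(σ⃗)` for `1 ≤ i ≤ k`, where `σ⃗ = σv` has length `k−1`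
and `σ^k = ε`. -/
def comajI {n : ℕ} (R : Finset ℕ) (k : ℕ) (σv : Fin (k-1) → Equiv.Perm (Fin n)) (i : ℕ) : ℕ :=
  Comaj R (Zvec R (extFun σv) (i-1)) (extFun σv (i-1))

/-- the exponent of the monomial `q^S` for `S ∈ (ℕ^r)^n` : the (0-indexed) variable `i`
(that is, `q_{i+1}`) records the `(r−i)`-th (0-indexed: `r−1−i`-th) coordinates. -/
def expOf {n r : ℕ} (S : Fin n → Seq r) : Fin r →₀ ℕ :=
  Finsupp.equivFunOnFinite.symm (fun i => ∑ j : Fin n, S j (Fin.rev i))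

/-- the formal power series whose coefficient at a monomial `d` counts the elements
`a : α` satisfying `P a d`. -/
def countSeriesP {σty α : Type*} (P : α → (σty →₀ ℕ) → Prop) : MvPowerSeries σty ℤ :=
  fun d => (Nat.card {a : α // P a d} : ℤ)

/-- `∑_{S ∈ (ℕ^r)^n, P S} q^S`. -/
def countSeries {n r : ℕ} (P : (Fin n → Seq r) → Prop) : MvPowerSeries (Fin r) ℤ :=
  countSeriesP (fun S d => P S ∧ expOf S = d)

/-- the Pochhammer factor `(q_i; q_i)_n = ∏_{j=1}^n (1 − q_i^j)`. -/
def pochOne {r : ℕ} (n : ℕ) (i : Fin r) : MvPowerSeries (Fin r) ℤ :=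
  ∏ j ∈ Finset.Icc 1 n, (1 - (MvPowerSeries.X i : MvPowerSeries (Fin r) ℤ) ^ j)

/-- `∏_{i=1}^{r} (q_i; q_i)_n`. -/
def pochAll (n r : ℕ) : MvPowerSeries (Fin r) ℤ :=
  ∏ i : Fin r, pochOne n i

/-- the exponent of `q_1^{comaj¹_R(σ⃗)} ⋯ q_k^{comaj^k_R(σ⃗)}`. -/
def comajExp {n : ℕ} (R : Finset ℕ) (k : ℕ) (σv : Fin (k-1) → Equiv.Perm (Fin n)) :
    Fin k →₀ ℕ :=
  Finsupp.equivFunOnFinite.symm (fun i => comajI R k σv (i.val + 1))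

/-- A standard Young tableau of shape `μ` (with `μ.card` cells), recorded by the
position `pos i` of each (1-indexed) entry `i ∈ {1, …, μ.card}`; entries increase
left-to-right along rows and down columns (matrix convention), and `pos` is a
bijection from `{1, …, μ.card}` onto the cells of `μ` (normalized by `0` outside). -/
structure SYT (μ : YoungDiagram) where
  pos : ℕ → ℕ × ℕ
  mem : ∀ i ∈ Finset.Icc 1 μ.card, pos i ∈ μ
  inj : ∀ i ∈ Finset.Icc 1 μ.card, ∀ j ∈ Finset.Icc 1 μ.card, pos i = pos j → i = j
  surj : ∀ c ∈ μ, ∃ i ∈ Finset.Icc 1 μ.card, pos i = c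
  row_inc : ∀ i ∈ Finset.Icc 1 μ.card, ∀ j ∈ Finset.Icc 1 μ.card,
    (pos i).1 = (pos j).1 → (pos i).2 < (pos j).2 → i < j
  col_inc : ∀ i ∈ Finset.Icc 1 μ.card, ∀ j ∈ Finset.Icc 1 μ.card,
    (pos i).2 = (pos j).2 → (pos i).1 < (pos j).1 → i < j
  junk : ∀ i, i ∉ Finset.Icc 1 μ.card → pos i = 0

/-- `des(T)` : the set of `i ∈ {1, …, n−1}` such that `i+1` lies in a strictly
higher row of `T` than `i` (in matrix convention: a strictly larger row index). -/
def desSYT {μ : YoungDiagram} (T : SYT μ) : Finset ℕ :=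
  (Finset.Icc 1 (μ.card - 1)).filter (fun i => (T.pos i).1 < (T.pos (i+1)).1)

/-- the ordinary descent set `des(π) = {i : π_i > π_{i+1}}` (1-indexed). -/
def desPerm {n : ℕ} (π : Equiv.Perm (Fin n)) : Finset ℕ :=
  (Finset.Icc 1 (n-1)).filter (fun i => pget π (i+1) < pget π i)

/-- `comaj(π) = ∑_{i ∈ des(π)} (n − i)`. -/
def comajP {n : ℕ} (π : Equiv.Perm (Fin n)) : ℕ :=
  ∑ i ∈ desPerm π, (n - i)


/-- `Z^{(2)}` : delete the first coordinate of each sequence. -/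
def tailS {n r : ℕ} (S : Fin n → Seq (r+1)) : Fin n → Seq r :=
  fun v i => S v i.succ

/-- the exponent of the monomial `q^S` for `S ∈ (ℕ^r)^n`, viewed in the `r+1` variables
`q_1, …, q_{r+1}` (a monomial in `q_1, …, q_r` only). -/
def expTail {n r : ℕ} (S : Fin n → Seq r) : Fin (r+1) →₀ ℕ :=
  Finsupp.equivFunOnFinite.symm (fun i =>
    if h : i.val < r then ∑ j : Fin n, S j (Fin.rev ⟨i.val, h⟩) else 0)

open Finset MvPowerSeries

/-- Coefficients are cardinalities of fibres, so this is `∑ a, q ^ f a` only when the fibres are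
finite (`Nat.card` of an infinite type is `0`). -/
def genFun {ι α : Type*} (f : α → ι →₀ ℕ) : MvPowerSeries ι ℤ :=
  countSeriesP fun a d => f a = d

def FiniteFibers {ι α : Type*} (f : α → ι →₀ ℕ) : Prop :=
  ∀ d, Finite {a // f a = d}

section GenFun

variable {ι α β : Type*}

theorem coeff_genFun (f : α → ι →₀ ℕ) (d : ι →₀ ℕ) :
    coeff d (genFun f) = Nat.card {a // f a = d} :=
  rfl

theorem countSeriesP_and_eq_genFun (P : α → Prop) (f : α → ι →₀ ℕ) :
    countSeriesP (fun a d => P a ∧ f a = d) = genFun fun a : Subtype P => f a := by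
  ext d
  exact congrArg Nat.cast (Nat.card_congr (Equiv.subtypeSubtypeEquivSubtypeInter P _).symm)

theorem genFun_congr (e : α ≃ β) {f : α → ι →₀ ℕ} {g : β → ι →₀ ℕ} (h : ∀ a, g (e a) = f a) :
    genFun f = genFun g := by
  ext d
  exact congrArg Nat.cast (Nat.card_congr (e.subtypeEquiv fun a => by simp only [h a]))

theorem genFun_const [Unique α] (d₀ : ι →₀ ℕ) : genFun (fun _ : α => d₀) = monomial d₀ 1 := by
  ext d
  rw [coeff_genFun, coeff_monomial]
  split_ifs with h
  · have : Unique {_a : α // d₀ = d} :=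
      ⟨⟨⟨default, h.symm⟩⟩, fun _ => Subtype.ext (Subsingleton.elim _ _)⟩
    simp
  · have : IsEmpty {_a : α // d₀ = d} := ⟨fun a => h a.2.symm⟩
    simp

theorem monomial_mul_genFun (d₀ : ι →₀ ℕ) (f : α → ι →₀ ℕ) :
    monomial d₀ 1 * genFun f = genFun fun a => d₀ + f a := by
  ext d
  rw [coeff_monomial_mul, coeff_genFun, coeff_genFun]
  split_ifs with h
  · rw [one_mul]
    exact congrArg _ (Nat.card_congr (Equiv.subtypeEquivRight fun a => by
      rw [add_comm, eq_tsub_iff_add_eq_of_le h]))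
  · have : IsEmpty {a // d₀ + f a = d} := ⟨fun a => h (a.2 ▸ le_self_add)⟩
    simp

theorem genFun_sumElim {f : α → ι →₀ ℕ} {g : β → ι →₀ ℕ} (hf : FiniteFibers f)
    (hg : FiniteFibers g) : genFun (Sum.elim f g) = genFun f + genFun g := by
  ext d
  have := hf d
  have := hg d
  rw [map_add, coeff_genFun, coeff_genFun, coeff_genFun, ← Nat.cast_add, ← Nat.card_sum]
  exact congrArg _ (Nat.card_congr (Equiv.subtypeSum))

theorem genFun_mul {f : α → ι →₀ ℕ} {g : β → ι →₀ ℕ} (hf : FiniteFibers f)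
    (hg : FiniteFibers g) : genFun f * genFun g = genFun fun x : α × β => f x.1 + g x.2 := by
  ext d
  have e : {x : α × β // f x.1 + g x.2 = d} ≃
      Σ p : antidiagonal d, {a // f a = p.1.1} × {b // g b = p.1.2} :=
    { toFun := fun x => ⟨⟨(f x.1.1, g x.1.2), mem_antidiagonal.mpr x.2⟩, ⟨x.1.1, rfl⟩, ⟨x.1.2, rfl⟩⟩
      invFun := fun y => ⟨(y.2.1, y.2.2), by rw [y.2.1.2, y.2.2.2]; exact mem_antidiagonal.mp y.1.2⟩
      left_inv := fun x => rfl
      right_inv := by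
        rintro ⟨⟨⟨p₁, p₂⟩, hp⟩, ⟨a, ha⟩, ⟨b, hb⟩⟩
        obtain rfl : f a = p₁ := ha
        obtain rfl : g b = p₂ := hb
        rfl }
  have (p : antidiagonal d) : Finite ({a // f a = p.1.1} × {b // g b = p.1.2}) :=
    have := hf p.1.1; have := hg p.1.2; inferInstance
  rw [coeff_mul, coeff_genFun, Nat.card_congr e, Nat.card_sigma, ← sum_coe_sort, Nat.cast_sum]
  simp only [coeff_genFun, Nat.card_prod, Nat.cast_mul]

theorem FiniteFibers.comp {f : α → ι →₀ ℕ} (hf : FiniteFibers f) {g : β → α}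
    (hg : Function.Injective g) : FiniteFibers fun b => f (g b) := fun d =>
  have := hf d
  Finite.of_injective (fun b => (⟨g b.1, b.2⟩ : {a // f a = d}))
    fun _ _ h => Subtype.ext (hg (congrArg Subtype.val h))

theorem finiteFibers_of_le [Preorder α] [LocallyFiniteOrderBot α] {f : α → ι →₀ ℕ}
    (b : (ι →₀ ℕ) → α) (hb : ∀ a, a ≤ b (f a)) : FiniteFibers f := fun d =>
  ((Set.finite_Iic (b d)).subset fun a (ha : f a = d) => ha ▸ hb a).to_subtype

end GenFun

section Partitions

variable {ι : Type*}

theorem finiteFibers_single_mul (x : ι) {w : ℕ} (hw : 0 < w) :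
    FiniteFibers fun c : ℕ => Finsupp.single x (w * c) :=
  finiteFibers_of_le (fun d => d x) fun c => by simpa using Nat.le_mul_of_pos_left c hw

theorem finiteFibers_single_sum (x : ι) (n : ℕ) :
    FiniteFibers fun g : Fin n → ℕ => Finsupp.single x (∑ t, g t) :=
  finiteFibers_of_le (fun d _ => d x) fun g t => by
    simpa using single_le_sum (fun t _ => Nat.zero_le (g t)) (mem_univ t)

theorem one_sub_X_pow_mul_genFun (x : ι) {w : ℕ} (hw : 0 < w) :
    (1 - X x ^ w) * genFun (fun c : ℕ => Finsupp.single x (w * c)) = 1 := by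
  set f := fun c : ℕ => Finsupp.single x (w * c)
  have hsucc : (fun c => f (c + 1)) = fun c => Finsupp.single x w + f c := by
    ext c : 1
    simp only [f, ← Finsupp.single_add, mul_add_one, add_comm]
  have hsplit : genFun f = X x ^ w * genFun f + 1 := calc
    genFun f = genFun (Sum.elim (fun c => f (c + 1)) fun _ : Unit => f 0) :=
      genFun_congr Equiv.natSumPUnitEquivNat.symm (by intro c; cases c <;> rfl)
    _ = X x ^ w * genFun f + 1 := by
      rw [genFun_sumElim ((finiteFibers_single_mul x hw).comp Nat.succ_injective)
          (fun _ => Subtype.finite), genFun_const, hsucc, ← monomial_mul_genFun, ← X_pow_eq]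
      simp [f, monomial_zero_one]
  linear_combination hsplit

theorem monotone_cons_iff {α : Type*} [Preorder α] {n : ℕ} {a : α} {f : Fin n → α} :
    Monotone (Fin.cons a f : Fin (n + 1) → α) ↔ (∀ i, a ≤ f i) ∧ Monotone f := by
  rw [monotone_iff_forall_lt, monotone_iff_forall_lt]
  exact Fin.liftFun_cons (· ≤ ·)

def monotoneConsEquiv (n : ℕ) :
    ℕ × {g : Fin n → ℕ // Monotone g} ≃ {g : Fin (n + 1) → ℕ // Monotone g} where
  toFun p := ⟨Fin.cons p.1 fun t => p.2.1 t + p.1,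
    monotone_cons_iff.mpr ⟨fun _ => le_add_self, p.2.2.add_const _⟩⟩
  invFun g := (g.1 0, ⟨fun t => g.1 t.succ - g.1 0,
    fun _ _ h => Nat.sub_le_sub_right (g.2 (Fin.succ_le_succ_iff.mpr h)) _⟩)
  left_inv p := by simp
  right_inv g := by
    ext t
    refine Fin.cases rfl (fun t => ?_) t
    simp [Nat.sub_add_cancel (g.2 (Fin.zero_le t.succ))]

theorem prod_one_sub_X_pow_mul_genFun_monotone (x : ι) (n : ℕ) :
    (∏ j ∈ Icc 1 n, (1 - X x ^ j)) *
      genFun (fun g : {g : Fin n → ℕ // Monotone g} => Finsupp.single x (∑ t, g.1 t)) = 1 := by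
  induction n with
  | zero =>
    let : Unique {g : Fin 0 → ℕ // Monotone g} :=
      ⟨⟨⟨finZeroElim, fun a => a.elim0⟩⟩, fun _ => Subtype.ext (Subsingleton.elim _ _)⟩
    simp [genFun_const, monomial_zero_one]
  | succ n ih =>
    have hweight (p : ℕ × {g : Fin n → ℕ // Monotone g}) :
        Finsupp.single x (∑ t, (monotoneConsEquiv n p).1 t) =
          Finsupp.single x ((n + 1) * p.1) + Finsupp.single x (∑ t, p.2.1 t) := by
      simp only [monotoneConsEquiv, Equiv.coe_fn_mk, Fin.sum_univ_succ, Fin.cons_zero,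
        Fin.cons_succ, sum_add_distrib, sum_const, card_univ, Fintype.card_fin, smul_eq_mul,
        ← Finsupp.single_add]
      ring_nf
    have hsplit : genFun (fun g : {g : Fin (n + 1) → ℕ // Monotone g} =>
          Finsupp.single x (∑ t, g.1 t)) =
        genFun (fun c : ℕ => Finsupp.single x ((n + 1) * c)) *
          genFun (fun g : {g : Fin n → ℕ // Monotone g} => Finsupp.single x (∑ t, g.1 t)) := by
      rw [genFun_mul (finiteFibers_single_mul x (by omega))
        ((finiteFibers_single_sum x n).comp Subtype.val_injective)]
      exact (genFun_congr (monotoneConsEquiv n) hweight).symm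
    rw [prod_Icc_succ_top (by omega), hsplit]
    linear_combination (∏ j ∈ Icc 1 n, (1 - X x ^ j)) *
      genFun (fun g : {g : Fin n → ℕ // Monotone g} => Finsupp.single x (∑ t, g.1 t)) *
      one_sub_X_pow_mul_genFun x (by omega : 0 < n + 1) + ih

end Partitions

section StepSequences

variable {n : ℕ} (D : Finset ℕ)

-- Positions are 0-indexed: `j ∈ D` asks for a strict step from the paper's position `j` to `j + 1`.
def MonotoneStrictAt (h : Fin n → ℕ) : Prop :=
  ∀ i j : Fin n, i ⋖ j → h i + (if (j : ℕ) ∈ D then 1 else 0) ≤ h j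

def countLe (t : ℕ) : ℕ := #{p ∈ D | p ≤ t}

theorem countLe_of_add_one_eq {i j : ℕ} (h : i + 1 = j) :
    countLe D j = countLe D i + if j ∈ D then 1 else 0 := by
  subst h
  simp only [countLe, card_filter]
  rw [← sum_ite_eq' D (i + 1) (fun _ => 1), ← sum_add_distrib]
  refine sum_congr rfl fun p _ => ?_
  split_ifs <;> omega

theorem sum_countLe : ∑ t : Fin n, countLe D t = ∑ p ∈ D, (n - p) := by
  simp only [countLe, card_filter]
  rw [sum_comm]
  refine sum_congr rfl fun p _ => ?_
  rw [Fin.sum_univ_eq_sum_range (fun t => if p ≤ t then 1 else 0), ← card_filter, range_eq_Ico,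
    Ico_filter_le, Nat.card_Ico, max_eq_right p.zero_le]

theorem monotoneStrictAt_add_countLe_iff {g : Fin n → ℕ} :
    MonotoneStrictAt D (fun t => g t + countLe D t) ↔ Monotone g := by
  rw [monotone_iff_forall_covBy]
  refine forall₂_congr fun i j => imp_congr_right fun hij => ?_
  simp only [countLe_of_add_one_eq D (Nat.covBy_iff_add_one_eq.mp (Fin.covBy_iff.mp hij))]
  omega

theorem countLe_le_of_monotoneStrictAt (hD : 0 ∉ D) {h : Fin n → ℕ}
    (hh : MonotoneStrictAt D h) (t : Fin n) : countLe D t ≤ h t := by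
  obtain ⟨k, hk⟩ := t
  induction k with
  | zero => simp [countLe, filter_eq_empty_iff.mpr fun p hp (hp0 : p = 0) => hD (hp0 ▸ hp)]
  | succ k ih =>
    have step := hh ⟨k, by omega⟩ ⟨k + 1, hk⟩ (by simp)
    have := ih (by omega)
    simp only at step this
    rw [countLe_of_add_one_eq D rfl]
    omega

def monotoneEquivMonotoneStrictAt (hD : 0 ∉ D) :
    {g : Fin n → ℕ // Monotone g} ≃ {h : Fin n → ℕ // MonotoneStrictAt D h} where
  toFun g := ⟨fun t => g.1 t + countLe D t, (monotoneStrictAt_add_countLe_iff D).mpr g.2⟩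
  invFun h := ⟨fun t => h.1 t - countLe D t, (monotoneStrictAt_add_countLe_iff D).mp <| by
    simpa only [Nat.sub_add_cancel (countLe_le_of_monotoneStrictAt D hD h.2 _)] using h.2⟩
  left_inv g := by simp
  right_inv h := by
    ext t
    exact Nat.sub_add_cancel (countLe_le_of_monotoneStrictAt D hD h.2 t)

theorem genFun_monotoneStrictAt (hD : 0 ∉ D) {ι : Type*} (x : ι) :
    genFun (fun h : {h : Fin n → ℕ // MonotoneStrictAt D h} => Finsupp.single x (∑ t, h.1 t)) =
      monomial (Finsupp.single x (∑ p ∈ D, (n - p))) 1 *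
        genFun (fun g : {g : Fin n → ℕ // Monotone g} => Finsupp.single x (∑ t, g.1 t)) := by
  rw [monomial_mul_genFun]
  refine (genFun_congr (monotoneEquivMonotoneStrictAt D hD) fun g => ?_).symm
  simp [monotoneEquivMonotoneStrictAt, sum_add_distrib, sum_countLe, ← Finsupp.single_add,
    add_comm]

end StepSequences

section Reading

variable {n r : ℕ}

theorem lexLt_iff_toLex_lt {a b : Seq r} : lexLt a b ↔ toLex a < toLex b := Iff.rfl

theorem lexLt_iff_head_tail {u v : Seq (r + 1)} :
    lexLt u v ↔ u 0 < v 0 ∨ u 0 = v 0 ∧ lexLt (Fin.tail u) (Fin.tail v) := by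
  have h := Fin.pi_lex_lt_cons_cons (x₀ := u 0) (y₀ := v 0) (x := Fin.tail u) (y := Fin.tail v)
    (· < ·)
  rw [Fin.cons_self_tail, Fin.cons_self_tail] at h
  exact h

theorem eq_iff_head_tail {u v : Seq (r + 1)} : u = v ↔ u 0 = v 0 ∧ Fin.tail u = Fin.tail v := by
  simpa only [Fin.cons_self_tail] using
    Fin.cons_inj (x₀ := u 0) (y₀ := v 0) (x := Fin.tail u) (y := Fin.tail v)

theorem sget_tailS (Z : Fin n → Seq (r + 1)) (i : ℕ) : sget (tailS Z) i = Fin.tail (sget Z i) := by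
  unfold sget
  split_ifs <;> rfl

theorem readBefore_iff_head (R : Finset ℕ) (Z : Fin n → Seq (r + 1)) (i j : ℕ) :
    readBefore R Z i j ↔
      sget Z i 0 < sget Z j 0 ∨ sget Z i 0 = sget Z j 0 ∧ readBefore R (tailS Z) i j := by
  simp only [readBefore, sget_tailS, lexLt_iff_head_tail, eq_iff_head_tail (u := sget Z i)]
  tauto

theorem desCond_iff_not_readBefore (R : Finset ℕ) (S : Fin n → Seq r) (σ : Equiv.Perm (Fin n))
    {i : ℕ} (hne : pget σ i ≠ pget σ (i + 1)) :
    desCond R S σ i ↔ ¬ readBefore R S (pget σ i) (pget σ (i + 1)) := by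
  unfold desCond readBefore lexLe
  generalize pget σ i = a at *
  generalize pget σ (i + 1) = b at *
  simp only [lexLt_iff_toLex_lt]
  rw [← @toLex_inj _ (sget S b), ← @toLex_inj _ (sget S a)]
  generalize toLex (sget S a) = u
  generalize toLex (sget S b) = v
  have := lt_trichotomy u v
  have := @lt_asymm _ _ u v
  have := lt_irrefl u
  grind

theorem pget_val_add_one (σ : Equiv.Perm (Fin n)) (i : Fin n) : pget σ (i + 1) = σ i + 1 := by
  simp [pget]

theorem sget_val_add_one (S : Fin n → Seq r) (v : Fin n) : sget S (v + 1) = S v := by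
  simp [sget]

theorem val_eq_of_covBy {i j : Fin n} (h : i ⋖ j) : (j : ℕ) = i + 1 :=
  (Nat.covBy_iff_add_one_eq.mp (Fin.covBy_iff.mp h)).symm

theorem forall_mem_Icc_iff_forall_covBy {P : ℕ → Prop} :
    (∀ p ∈ Icc 1 (n - 1), P p) ↔ ∀ i j : Fin n, i ⋖ j → P j := by
  constructor
  · intro h i j hij
    have := val_eq_of_covBy hij
    exact h j (mem_Icc.mpr ⟨by omega, by omega⟩)
  · intro h p hp
    rw [mem_Icc] at hp
    exact h ⟨p - 1, by omega⟩ ⟨p, by omega⟩ (by simp; omega)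

theorem pget_of_covBy (σ : Equiv.Perm (Fin n)) {i j : Fin n} (h : i ⋖ j) :
    pget σ j = σ i + 1 := by
  rw [val_eq_of_covBy h, pget_val_add_one]

variable (R : Finset ℕ) (σ : Equiv.Perm (Fin n))

theorem isReading_iff_covBy (S : Fin n → Seq r) :
    IsReading R S σ ↔ ∀ i j : Fin n, i ⋖ j → readBefore R S (σ i + 1) (σ j + 1) := by
  unfold IsReading
  rw [forall_mem_Icc_iff_forall_covBy]
  refine forall₃_congr fun i j h => ?_
  rw [pget_of_covBy σ h, pget_val_add_one]

theorem mem_desSet_iff_not_readBefore (S : Fin n → Seq r) {i j : Fin n} (h : i ⋖ j) :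
    (j : ℕ) ∈ DesSet R S σ ↔ ¬ readBefore R S (σ i + 1) (σ j + 1) := by
  have hne : (σ i : ℕ) + 1 ≠ σ j + 1 := by simpa [Fin.val_inj] using h.ne
  have := val_eq_of_covBy h
  rw [DesSet, mem_filter, desCond_iff_not_readBefore R S σ (by rwa [pget_of_covBy σ h,
    pget_val_add_one]), pget_of_covBy σ h, pget_val_add_one, mem_Icc]
  have := j.isLt
  exact and_iff_right ⟨by omega, by omega⟩

theorem isReading_iff_monotoneStrictAt {D : Finset ℕ} {Z : Fin n → Seq (r + 1)}
    (hdes : DesSet R (tailS Z) σ = D) :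
    IsReading R Z σ ↔ MonotoneStrictAt D fun t => Z (σ t) 0 := by
  rw [isReading_iff_covBy]
  refine forall₃_congr fun i j h => ?_
  have hj := mem_desSet_iff_not_readBefore R σ (tailS Z) h
  rw [hdes] at hj
  rw [readBefore_iff_head, sget_val_add_one, sget_val_add_one]
  by_cases hjD : (j : ℕ) ∈ D
  · simp only [hjD, if_true, hj.mp hjD, and_false, or_false]
    omega
  · simp only [hjD, if_false, not_not.mp (mt hj.mpr hjD), and_true]
    omega

end Reading

section Splitting

variable {n r : ℕ}

def splitHeads (σ : Equiv.Perm (Fin n)) :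
    (Fin n → Seq (r + 1)) ≃ (Fin n → Seq r) × (Fin n → ℕ) where
  toFun Z := (tailS Z, fun t => Z (σ t) 0)
  invFun p v := Fin.cons (p.2 (σ.symm v)) (p.1 v)
  left_inv Z := by
    funext v
    simp only [Equiv.apply_symm_apply]
    exact Fin.cons_self_tail (Z v)
  right_inv p := by
    ext <;> simp [tailS]

theorem expOf_eq_expTail_add (Z : Fin n → Seq (r + 1)) :
    expOf Z = expTail (tailS Z) + Finsupp.single (Fin.last r) (∑ v, Z v 0) := by
  ext i
  simp only [expOf, expTail, Finsupp.coe_equivFunOnFinite_symm, Finsupp.add_apply,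
    Finsupp.single_apply]
  split_ifs with hi hl hl
  · exact absurd hl (by simp [Fin.ext_iff]; omega)
  · simp only [add_zero]
    congr! 2 with v
    simp only [tailS]
    congr 1
    ext
    simp
    omega
  · simp [hl.symm]
  · exact absurd (Fin.ext (by simp; omega)) hl

theorem expTail_castSucc_rev (S : Fin n → Seq r) (k : Fin r) :
    expTail S (Fin.rev k).castSucc = ∑ j, S j k := by
  have := k.isLt
  have hk : ((Fin.rev k).castSucc : Fin (r + 1)).val < r := by simp; omega
  rw [expTail, Finsupp.coe_equivFunOnFinite_symm, dif_pos hk]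
  congr! 2
  ext
  simp
  omega

theorem finiteFibers_expTail : FiniteFibers (expTail : (Fin n → Seq r) → _) :=
  finiteFibers_of_le (fun d _ k => d (Fin.rev k).castSucc) fun S j k => by
    show S j k ≤ expTail S (Fin.rev k).castSucc
    rw [expTail_castSucc_rev]
    exact single_le_sum (f := fun j => S j k) (fun _ _ => Nat.zero_le _) (mem_univ j)

def readingEquiv (R D : Finset ℕ) (σ : Equiv.Perm (Fin n)) :
    {Z : Fin n → Seq (r + 1) // IsReading R Z σ ∧ DesSet R (tailS Z) σ = D} ≃
      {S : Fin n → Seq r // DesSet R S σ = D} × {h : Fin n → ℕ // MonotoneStrictAt D h} :=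
  ((splitHeads σ).subtypeEquiv fun _ =>
    ⟨fun ⟨hr, hd⟩ => ⟨hd, (isReading_iff_monotoneStrictAt R σ hd).mp hr⟩,
      fun ⟨hd, hm⟩ => ⟨(isReading_iff_monotoneStrictAt R σ hd).mpr hm, hd⟩⟩).trans
    (Equiv.subtypeProdEquivProd)

theorem genFun_readings_eq_mul (R D : Finset ℕ) (σ : Equiv.Perm (Fin n)) :
    genFun (fun Z : {Z : Fin n → Seq (r + 1) // IsReading R Z σ ∧ DesSet R (tailS Z) σ = D} =>
        expOf Z.1) =
      genFun (fun S : {S : Fin n → Seq r // DesSet R S σ = D} => expTail S.1) *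
        genFun (fun h : {h : Fin n → ℕ // MonotoneStrictAt D h} =>
          Finsupp.single (Fin.last r) (∑ t, h.1 t)) := by
  rw [genFun_mul (finiteFibers_expTail.comp Subtype.val_injective)
    ((finiteFibers_single_sum _ n).comp Subtype.val_injective)]
  refine genFun_congr (readingEquiv R D σ) fun Z => ?_
  simp only [readingEquiv, splitHeads, Equiv.subtypeProdEquivProd, expOf_eq_expTail_add]
  simp [Equiv.sum_comp σ fun v => Z.1 v 0]

end Splitting

theorem general_proposition_general (n r : ℕ)
    (R D : Finset ℕ) (hD : D ⊆ Finset.Icc 1 (n-1))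
    (σ : Equiv.Perm (Fin n)) :
    pochOne n (Fin.last r) *
      countSeries (fun Z : Fin n → Seq (r+1) =>
        IsReading R Z σ ∧ DesSet R (tailS Z) σ = D) =
    MvPowerSeries.monomial (R := ℤ) (Finsupp.single (Fin.last r) (∑ i ∈ D, (n - i))) 1 *
      countSeriesP (α := Fin n → Seq r)
        (fun S d => DesSet R S σ = D ∧ expTail S = d) := by
  have hD0 : 0 ∉ D := fun h => by simpa using hD h
  rw [countSeries, countSeriesP_and_eq_genFun, countSeriesP_and_eq_genFun, genFun_readings_eq_mul,
    genFun_monotoneStrictAt D hD0, pochOne]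
  linear_combination
    (monomial (Finsupp.single (Fin.last r) (∑ i ∈ D, (n - i))) 1 *
      genFun (fun S : {S : Fin n → Seq r // DesSet R S σ = D} => expTail S.1)) *
    prod_one_sub_X_pow_mul_genFun_monotone (Fin.last r) n

/-- **Proposition (the general proposition).**  In `r+1` variables `q_1, …, q_{r+1}`
(so "`q_r`" of the paper is the last variable), for `R, D ⊆ {1, …, n−1}` and `σ ∈ S_n`:
`(q_{r+1};q_{r+1})_n ⬝ ∑_{Z ∈ (ℕ^{r+1})^n, σ_R(Z) = σ, Des_{R,Z⁽²⁾}(σ) = D} q^Z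
  = q_{r+1}^{c(D)} ⬝ ∑_{S ∈ (ℕ^r)^n, Des_{R,S}(σ) = D} q^S`. -/
theorem general_proposition (n r : ℕ) (hn : 1 ≤ n)
    (R D : Finset ℕ) (hR : R ⊆ Finset.Icc 1 (n-1)) (hD : D ⊆ Finset.Icc 1 (n-1))
    (σ : Equiv.Perm (Fin n)) :
    pochOne n (Fin.last r) *
      countSeries (fun Z : Fin n → Seq (r+1) =>
        IsReading R Z σ ∧ DesSet R (tailS Z) σ = D) =
    MvPowerSeries.monomial (R := ℤ) (Finsupp.single (Fin.last r) (∑ i ∈ D, (n - i))) 1 *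
      countSeriesP (α := Fin n → Seq r)
        (fun S d => DesSet R S σ = D ∧ expTail S = d) :=
  general_proposition_general n r R D hD σ

end

end RomeroComaj
end

section
/- Let R ⊆ {1,…,n−1}, let σ^1,…,σ^r, τ ∈ S_n, let m ≥ 1, let 1 ≤ j ≤ n, and let S ∈ (ℕ^m)^n with reading permutation σ_R(S) = σ. Define φ_{n−j}(S) ∈ (ℕ^m)^n to be the list obtained from S by adding 1 to the first coordinate of s^{σ_l} for every l > j and leaving s^{σ_l} unchanged for l ≤ j. For S' ∈ (ℕ^m)^n write Z(S') = Z_{R,σ^r}(Z_{R,σ^{r−1}}(⋯(Z_{R,σ^1}(S'))⋯)) ∈ (ℕ^{m+r})^n. If Des_{R, Z(S)}(τ) = D, then Des_{R, Z(φ_{n−j}(S))}(τ) = D. -/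
/-!
`Des_{R,S}(τ)` and `Z_{R,τ}(S)` depend on `S` only through its reading order: the order on
`1, …, n` comparing `(s^i, i)` lexicographically, equal sequences being tie-broken by `R`. So
lists with the same reading order stay so under every `Z_{R,τ}` and have the same descent sets.
It remains to see that `φ_{n−j}` preserves the reading order of `S` when `σ_R(S) = σ`: it adds
the same vector `e₁` to all `s^{σ_l}` with `l > j`, which keeps their relative order, and an
entry read after another one stays after it when it is raised.
-/

open scoped Classical

namespace RomeroComaj

noncomputable section

/-- `φ_{n−j}` : add `1` to the first coordinate of `s^{σ_l}` for every `l > j`. -/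
def phiMap {n m : ℕ} (σ : Equiv.Perm (Fin n)) (j : ℕ) (S : Fin n → Seq m) :
    Fin n → Seq m :=
  fun v c => S v c + if c.val = 0 ∧ j < (σ.symm v).val + 1 then 1 else 0

/-- `Zchain R σs r S = Z_{R,σ^r}(⋯(Z_{R,σ^1}(S))⋯)` where `σ^{i+1} = σs i`. -/
def Zchain {n m : ℕ} (R : Finset ℕ) (σs : ℕ → Equiv.Perm (Fin n)) :
    (r : ℕ) → (Fin n → Seq m) → Fin n → Seq (m + r)
  | 0, S => S
  | (r+1), S => Zop R (σs r) (Zchain R σs r S)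

theorem lexLt_cons_iff {r : ℕ} (x y : ℕ) (s t : Seq r) :
    lexLt (Fin.cons x s : Seq (r + 1)) (Fin.cons y t) ↔ x < y ∨ x = y ∧ lexLt s t := by
  simp [lexLt, Fin.exists_fin_succ, Fin.forall_fin_succ, Fin.succ_lt_succ_iff, and_assoc,
    exists_and_left]

theorem rNbr_iff_Ico_subset {R : Finset ℕ} {a b : ℕ} (h : a ≤ b) :
    RNbr R a b ↔ Finset.Ico a b ⊆ R := by
  simp [RNbr, min_eq_left h, max_eq_right h, Finset.subset_iff]

def tieBefore (R : Finset ℕ) (i j : ℕ) : Prop :=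
  (i < j ∧ ¬ RNbr R i j) ∨ (j < i ∧ RNbr R j i)

theorem tieBefore_trans {R : Finset ℕ} {u v w : ℕ} (h₁ : tieBefore R u v) (h₂ : tieBefore R v w) :
    tieBefore R u w := by
  unfold tieBefore at *
  -- `R`-neighbourhood of an interval passes to subintervals and to unions of abutting intervals.
  rcases h₁ with ⟨huv, h₁⟩ | ⟨hvu, h₁⟩ <;> rcases h₂ with ⟨hvw, h₂⟩ | ⟨hwv, h₂⟩ <;>
    rcases lt_trichotomy u w with huw | rfl | hwu <;>
    simp only [rNbr_iff_Ico_subset, le_of_lt, *] at * <;>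
    first
    | omega
    | grind [Finset.Ico_subset_Ico, Finset.Ico_union_Ico_eq_Ico, Finset.union_subset_iff]

instance (R : Finset ℕ) : IsStrictOrder ℕ (tieBefore R) where
  irrefl _ h := by rcases h with h | h <;> exact lt_irrefl _ h.1
  trans _ _ _ := tieBefore_trans

section Reading

variable {n r : ℕ} {R : Finset ℕ}

theorem sget_succ (S : Fin n → Seq r) (a : Fin n) : sget S (a.val + 1) = S a := by
  simp [sget]

theorem readBefore_iff_lex (S : Fin n → Seq r) (u v : ℕ) :
    readBefore R S u v ↔
      Prod.Lex (· < ·) (tieBefore R) (toLex (sget S u), u) (toLex (sget S v), v) := by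
  rw [Prod.lex_def, toLex_inj]
  -- `lexLt` is definitionally `Pi.Lex (· < ·) (· < ·)`, the order of `Lex (Fin r → ℕ)`.
  rfl

theorem readBefore_asymm {S : Fin n → Seq r} {u v : ℕ} (h : readBefore R S u v) :
    ¬ readBefore R S v u := by
  rw [readBefore_iff_lex] at *
  exact asymm h

theorem readBefore_trans {S : Fin n → Seq r} {u v w : ℕ} (h₁ : readBefore R S u v)
    (h₂ : readBefore R S v w) : readBefore R S u w := by
  rw [readBefore_iff_lex] at *
  exact _root_.trans h₁ h₂

theorem readBefore_add_iff {S S' : Fin n → Seq r} {a b : Fin n} (c : Seq r)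
    (ha : S' a = S a + c) (hb : S' b = S b + c) :
    readBefore R S' (a + 1) (b + 1) ↔ readBefore R S (a + 1) (b + 1) := by
  simp only [readBefore_iff_lex, sget_succ, ha, hb, toLex_add, Prod.lex_def, add_lt_add_iff_right,
    add_left_inj]

theorem readBefore_of_add_right {S S' : Fin n → Seq r} {a b : Fin n} (c : Seq r)
    (h : readBefore R S (a + 1) (b + 1)) (ha : S' a = S a) (hb : S' b = S b + c) :
    readBefore R S' (a + 1) (b + 1) := by
  have hc : toLex (S b) ≤ toLex (S' b) := by
    rw [hb, toLex_add]
    exact le_add_of_nonneg_right (Pi.toLex_monotone fun _ => Nat.zero_le _)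
  rw [readBefore_iff_lex, sget_succ, sget_succ] at h ⊢
  rw [ha]
  rcases hc.lt_or_eq with hc | hc
  · have hle : toLex (S a) ≤ toLex (S b) := by
      obtain h | ⟨h, -⟩ := Prod.lex_def.1 h
      exacts [h.le, h.le]
    exact Prod.Lex.left _ _ (hle.trans_lt hc)
  · rwa [← hc]

theorem IsReading.readBefore_succ {S : Fin n → Seq r} {σ : Equiv.Perm (Fin n)}
    (hS : IsReading R S σ) (k : ℕ) (hk : k + 1 < n) :
    readBefore R S ((σ ⟨k, by omega⟩).val + 1) ((σ ⟨k + 1, hk⟩).val + 1) := by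
  simpa [pget, hk, show k < n by omega] using hS (k + 1) (by simp; omega)

theorem IsReading.readBefore_of_lt {S : Fin n → Seq r} {σ : Equiv.Perm (Fin n)}
    (hS : IsReading R S σ) {p q : Fin n} (hpq : p < q) :
    readBefore R S ((σ p).val + 1) ((σ q).val + 1) := by
  obtain ⟨q, hq⟩ := q
  change p.val < q at hpq
  induction q with
  | zero => omega
  | succ k ih =>
    obtain hpk | rfl := (Nat.lt_succ_iff.1 hpq).lt_or_eq
    · exact readBefore_trans (ih (by omega) hpk) (hS.readBefore_succ k hq)
    · exact hS.readBefore_succ p hq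

theorem desCond_iff_readBefore (S : Fin n → Seq r) (τ : Equiv.Perm (Fin n)) (i : ℕ) :
    desCond R S τ i ↔ readBefore R S (pget τ (i + 1)) (pget τ i) := by
  unfold desCond readBefore lexLe
  split_ifs <;> tauto

theorem readBefore_zop_iff (S : Fin n → Seq r) (τ : Equiv.Perm (Fin n)) (a b : Fin n) :
    readBefore R (Zop R τ S) (a + 1) (b + 1) ↔
      (DesSet R S τ ∩ Finset.Ico 1 ((τ.symm a).val + 1)).card <
          (DesSet R S τ ∩ Finset.Ico 1 ((τ.symm b).val + 1)).card ∨
        (DesSet R S τ ∩ Finset.Ico 1 ((τ.symm a).val + 1)).card =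
          (DesSet R S τ ∩ Finset.Ico 1 ((τ.symm b).val + 1)).card ∧
        readBefore R S (a + 1) (b + 1) := by
  simp only [readBefore, sget_succ, Zop, lexLt_cons_iff, Fin.cons_inj]
  tauto

end Reading

def SameReading {n r r' : ℕ} (R : Finset ℕ) (S : Fin n → Seq r) (S' : Fin n → Seq r') : Prop :=
  ∀ a b : Fin n, readBefore R S (a + 1) (b + 1) ↔ readBefore R S' (a + 1) (b + 1)

namespace SameReading

variable {n r r' : ℕ} {R : Finset ℕ} {S : Fin n → Seq r} {S' : Fin n → Seq r'}

theorem desSet_eq (h : SameReading R S S') (τ : Equiv.Perm (Fin n)) :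
    DesSet R S τ = DesSet R S' τ := by
  ext i
  simp only [DesSet, Finset.mem_filter, Finset.mem_Icc, desCond_iff_readBefore]
  refine and_congr_right fun hi => ?_
  rw [pget, pget, dif_pos (by omega), dif_pos (by omega)]
  exact h _ _

theorem zop (h : SameReading R S S') (τ : Equiv.Perm (Fin n)) :
    SameReading R (Zop R τ S) (Zop R τ S') := by
  intro a b
  rw [readBefore_zop_iff, readBefore_zop_iff, h.desSet_eq, h a b]

theorem zchain {m m' : ℕ} {S : Fin n → Seq m} {S' : Fin n → Seq m'} (h : SameReading R S S')
    (σs : ℕ → Equiv.Perm (Fin n)) (k : ℕ) :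
    SameReading R (Zchain R σs k S) (Zchain R σs k S') := by
  induction k with
  | zero => exact h
  | succ k ih => exact ih.zop (σs k)

end SameReading

def firstUnit (m : ℕ) : Seq m := fun c => if c.val = 0 then 1 else 0

theorem phiMap_apply {n m : ℕ} (σ : Equiv.Perm (Fin n)) (j : ℕ) (S : Fin n → Seq m) (v : Fin n) :
    phiMap σ j S v = S v + if j < (σ.symm v).val + 1 then firstUnit m else 0 := by
  funext c
  by_cases h : j < (σ.symm v).val + 1 <;> simp [phiMap, firstUnit, h]

theorem sameReading_phiMap {n m : ℕ} {R : Finset ℕ} {S : Fin n → Seq m} {σ : Equiv.Perm (Fin n)}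
    (hS : IsReading R S σ) (j : ℕ) : SameReading R (phiMap σ j S) S := by
  have cross (a b : Fin n) (ha : ¬ j < (σ.symm a).val + 1) (hb : j < (σ.symm b).val + 1) :
      readBefore R S (a + 1) (b + 1) ∧ readBefore R (phiMap σ j S) (a + 1) (b + 1) := by
    have hab : readBefore R S (a + 1) (b + 1) := by
      simpa using hS.readBefore_of_lt (p := σ.symm a) (q := σ.symm b) (by rw [Fin.lt_def]; omega)
    exact ⟨hab, readBefore_of_add_right (firstUnit m) hab (by simp [phiMap_apply, ha])
      (by simp [phiMap_apply, hb])⟩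
  intro a b
  by_cases ha : j < (σ.symm a).val + 1 <;> by_cases hb : j < (σ.symm b).val + 1
  · exact readBefore_add_iff (firstUnit m) (by simp [phiMap_apply, ha]) (by simp [phiMap_apply, hb])
  · obtain ⟨h₁, h₂⟩ := cross b a hb ha
    exact iff_of_false (readBefore_asymm h₂) (readBefore_asymm h₁)
  · exact iff_of_true (cross a b ha hb).2 (cross a b ha hb).1
  · exact readBefore_add_iff 0 (by simp [phiMap_apply, ha]) (by simp [phiMap_apply, hb])

theorem phi_preserves_descents_general (n m r : ℕ) (R : Finset ℕ)
    (σv : Fin r → Equiv.Perm (Fin n)) (τ σ : Equiv.Perm (Fin n)) (j : ℕ)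
    (S : Fin n → Seq m) (hS : IsReading R S σ) (D : Finset ℕ)
    (hD : DesSet R (Zchain R (extFun σv) r S) τ = D) :
    DesSet R (Zchain R (extFun σv) r (phiMap σ j S)) τ = D := by
  have hphi : SameReading R (phiMap σ j S) S := sameReading_phiMap hS j
  rw [← hD]
  exact (hphi.zchain (extFun σv) r).desSet_eq τ

/-- **Lemma.**  The injections `φ_{n−j}` preserve the descent sets computed after
applying the chain of `Z`-operators: if `σ_R(S) = σ` and
`Des_{R, Z_{R,σ^r} ⋯ Z_{R,σ^1}(S)}(τ) = D`, then
`Des_{R, Z_{R,σ^r} ⋯ Z_{R,σ^1}(φ_{n−j}(S))}(τ) = D`. -/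
theorem phi_preserves_descents (n m r : ℕ) (hn : 1 ≤ n) (hm : 1 ≤ m)
    (R : Finset ℕ) (hR : R ⊆ Finset.Icc 1 (n-1))
    (σv : Fin r → Equiv.Perm (Fin n)) (τ σ : Equiv.Perm (Fin n))
    (j : ℕ) (hj1 : 1 ≤ j) (hj2 : j ≤ n)
    (S : Fin n → Seq m) (hS : IsReading R S σ) (D : Finset ℕ)
    (hD : DesSet R (Zchain R (extFun σv) r S) τ = D) :
    DesSet R (Zchain R (extFun σv) r (phiMap σ j S)) τ = D :=
  phi_preserves_descents_general n m r R σv τ σ j S hS D hD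

end

end RomeroComaj
end
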